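/- arXiv:1110.0633 — 4 statements merged into one kernel-verified Lean document; each statement's English description precedes it below -/
import Mathlib

section
/- Let ν be a Radon measure on ℝ^d, let a > 1 and b > a^d. Then for ν-almost every x ∈ ℝ^d there exists a sequence of cubes Q_k centered at x with side lengths tending to 0 such that each Q_k is (a,b)-ν-doubling, i.e., ν(a Q_k) ≤ b ν(Q_k). -/
/-!
Call `x` bad if `ν (closedBall x (a * r)) > b * ν (closedBall x r)` for all small `r`. Iterating
this from a fixed scale `δ` down to `r ≈ δ / a ^ K` gives
`ν (closedBall x r) ≤ ν (closedBall x (a * δ)) * b⁻¹ ^ K ≲ (a ^ d / b) ^ K * r ^ d`,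
so ν has zero density with respect to Lebesgue measure at every bad point, as `b > a ^ d`.
A Besicovitch covering (Vitali family) argument shows that such points form a ν-null set.
-/

open MeasureTheory Metric Filter Set Module
open scoped NNReal ENNReal Topology

theorem measure_null_of_frequently_le_smul {α : Type*} [MetricSpace α] [SecondCountableTopology α]
    [HasBesicovitchCovering α] [MeasurableSpace α] [BorelSpace α] {ν μ : Measure α}
    [IsLocallyFiniteMeasure ν] [IsLocallyFiniteMeasure μ] {s : Set α}
    (hs : ∀ x ∈ s, ∀ ε : ℝ≥0, 0 < ε →
      ∃ᶠ r in 𝓝[>] 0, ν (closedBall x r) ≤ ε * μ (closedBall x r)) :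
    ν s = 0 := by
  refine measure_null_of_locally_null s fun x _ => ?_
  obtain ⟨o, xo, o_open, μo⟩ := Measure.exists_isOpen_measure_lt_top μ x
  refine ⟨s ∩ o, inter_mem_nhdsWithin _ (o_open.mem_nhds xo), ?_⟩
  have hle : ∀ ε : ℝ≥0, 0 < ε → ν (s ∩ o) ≤ ε * μ o := fun ε hε =>
    calc ν (s ∩ o) ≤ (ε • μ) (s ∩ o) :=
          (Besicovitch.vitaliFamily ν).measure_le_of_frequently_le (ε • μ)
            Measure.AbsolutelyContinuous.rfl _ fun y hy =>
              (Besicovitch.tendsto_filterAt ν y).frequently (by simpa using hs y hy.1 ε hε)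
      _ ≤ ε * μ o := by
          rw [Measure.smul_apply, ENNReal.smul_def, smul_eq_mul]
          gcongr
          exact inter_subset_right
  have hlim : Tendsto (fun ε : ℝ≥0 => (ε : ℝ≥0∞) * μ o) (𝓝[>] 0) (𝓝 0) := by
    have hcoe : Tendsto (fun ε : ℝ≥0 => (ε : ℝ≥0∞)) (𝓝[>] 0) (𝓝 0) :=
      ENNReal.tendsto_coe.2 (tendsto_id.mono_left nhdsWithin_le_nhds)
    simpa using ENNReal.Tendsto.mul_const hcoe (Or.inr μo.ne)
  exact le_zero_iff.1 (ge_of_tendsto hlim (eventually_nhdsWithin_of_forall hle))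

theorem ofReal_pow_mul_measure_closedBall_le {E : Type*} [PseudoMetricSpace E]
    [MeasurableSpace E] {ν : Measure E} {x : E} {a b δ : ℝ} (ha : 1 ≤ a)
    (hx : ∀ r, 0 < r → r ≤ δ → ENNReal.ofReal b * ν (closedBall x r) ≤ ν (closedBall x (a * r)))
    (K : ℕ) {r : ℝ} (hr : 0 < r) (hK : a ^ K * r ≤ a * δ) :
    ENNReal.ofReal b ^ K * ν (closedBall x r) ≤ ν (closedBall x (a * δ)) := by
  induction K generalizing r with
  | zero => simpa using measure_mono (closedBall_subset_closedBall (by simpa using hK))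
  | succ K ih =>
    have hrδ : r ≤ δ := by
      have : a ^ K * r ≤ δ :=
        le_of_mul_le_mul_left (by rwa [← mul_assoc, ← pow_succ']) (by linarith)
      nlinarith [one_le_pow₀ (n := K) ha]
    calc ENNReal.ofReal b ^ (K + 1) * ν (closedBall x r)
        = ENNReal.ofReal b ^ K * (ENNReal.ofReal b * ν (closedBall x r)) := by ring
      _ ≤ ENNReal.ofReal b ^ K * ν (closedBall x (a * r)) := by gcongr; exact hx r hr hrδ
      _ ≤ ν (closedBall x (a * δ)) := ih (by positivity) (by rwa [← mul_assoc, ← pow_succ])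

section FiniteDimensional

variable {E : Type*} [NormedAddCommGroup E] [NormedSpace ℝ E] [MeasurableSpace E] [BorelSpace E]
  [FiniteDimensional ℝ E]

theorem addHaar_closedBall_mul_measure_closedBall_le (μ : Measure E) [μ.IsAddHaarMeasure]
    {ν : Measure E} {x : E} {a b δ : ℝ} (ha : 1 ≤ a) (hb : 0 < b)
    (hx : ∀ r, 0 < r → r ≤ δ → ENNReal.ofReal b * ν (closedBall x r) ≤ ν (closedBall x (a * r)))
    {K : ℕ} {r : ℝ} (hr : 0 < r) (hδK : δ < a ^ K * r) (hK : a ^ K * r ≤ a * δ) :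
    μ (closedBall x δ) * ν (closedBall x r) ≤
      ENNReal.ofReal (a ^ finrank ℝ E / b) ^ K * ν (closedBall x (a * δ)) * μ (closedBall x r) := by
  set A := ENNReal.ofReal ((a ^ K) ^ finrank ℝ E)
  have hV : μ (closedBall x δ) ≤ A * μ (closedBall x r) :=
    calc μ (closedBall x δ) ≤ μ (closedBall x (a ^ K * r)) :=
          measure_mono (closedBall_subset_closedBall hδK.le)
      _ = A * μ (closedBall x r) := by
          rw [Measure.addHaar_closedBall_mul_of_pos μ x (by positivity),
            Measure.addHaar_closedBall_center μ x]
  have hscale : ENNReal.ofReal (a ^ finrank ℝ E / b) ^ K * ENNReal.ofReal b ^ K = A := by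
    rw [← mul_pow, ← ENNReal.ofReal_mul (by positivity), div_mul_cancel₀ _ hb.ne',
      ← ENNReal.ofReal_pow (by positivity), ← pow_mul, mul_comm, pow_mul]
  calc μ (closedBall x δ) * ν (closedBall x r)
      ≤ A * μ (closedBall x r) * ν (closedBall x r) := by gcongr
    _ = ENNReal.ofReal (a ^ finrank ℝ E / b) ^ K * (ENNReal.ofReal b ^ K * ν (closedBall x r)) *
          μ (closedBall x r) := by rw [← hscale]; ring
    _ ≤ _ := by gcongr; exact ofReal_pow_mul_measure_closedBall_le ha hx K hr hK

theorem eventually_measure_closedBall_le_mul_addHaar (μ : Measure E) [μ.IsAddHaarMeasure]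
    {ν : Measure E} [IsLocallyFiniteMeasure ν] {a b : ℝ} (ha : 1 < a)
    (hb : a ^ finrank ℝ E < b) {x : E}
    (hx : ∀ᶠ r in 𝓝[>] 0, ENNReal.ofReal b * ν (closedBall x r) ≤ ν (closedBall x (a * r)))
    {ε : ℝ≥0} (hε : 0 < ε) :
    ∀ᶠ r in 𝓝[>] 0, ν (closedBall x r) ≤ ε * μ (closedBall x r) := by
  obtain ⟨δ, hδ, hδx⟩ := mem_nhdsGT_iff_exists_Ioc_subset.1 hx
  rw [mem_Ioi] at hδ
  set c := ENNReal.ofReal (a ^ finrank ℝ E / b)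
  set M := ν (closedBall x (a * δ))
  have ha0 : 0 < a := by linarith
  have hb0 : 0 < b := (pow_pos ha0 _).trans hb
  have hc : c < 1 := ENNReal.ofReal_lt_one.2 ((div_lt_one hb0).2 hb)
  have hdecay : Tendsto (fun K : ℕ => c ^ K * M) atTop (𝓝 0) := by
    simpa using ENNReal.Tendsto.mul_const (ENNReal.tendsto_pow_atTop_nhds_zero_iff.2 hc)
      (Or.inr measure_closedBall_lt_top.ne)
  have hμδ : μ (closedBall x δ) ≠ 0 := (measure_closedBall_pos μ x hδ).ne'
  have hW : 0 < (ε : ℝ≥0∞) * μ (closedBall x δ) :=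
    ENNReal.mul_pos (by simpa using hε.ne') hμδ
  obtain ⟨K₀, hK₀⟩ := eventually_atTop.1 (hdecay.eventually (gt_mem_nhds hW))
  filter_upwards [Ioc_mem_nhdsGT (show 0 < δ / a ^ K₀ by positivity)] with r ⟨hr, hrK₀⟩
  -- `K` steps of ratio `a` carry `r` into `(δ, a * δ]`.
  obtain ⟨K, hKle, hKgt⟩ : ∃ K : ℕ, a ^ K ≤ a * δ / r ∧ a * δ / r < a ^ (K + 1) := by
    refine exists_nat_pow_near ?_ ha
    rw [le_div_iff₀ hr, one_mul]
    have : δ / a ^ K₀ ≤ δ := div_le_self hδ.le (one_le_pow₀ ha.le)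
    nlinarith
  have hK : a ^ K * r ≤ a * δ := (le_div_iff₀ hr).1 hKle
  have hδK : δ < a ^ K * r := by
    rw [div_lt_iff₀ hr, pow_succ', mul_assoc] at hKgt
    exact lt_of_mul_lt_mul_left hKgt ha0.le
  have hK₀K : K₀ ≤ K := by
    have : a ^ K₀ * r ≤ δ := by rw [le_div_iff₀ (by positivity)] at hrK₀; linarith
    exact ((pow_lt_pow_iff_right₀ ha).1 (lt_of_mul_lt_mul_right (this.trans_lt hδK) hr.le)).le
  refine (ENNReal.mul_le_mul_iff_right hμδ measure_closedBall_lt_top.ne).1 ?_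
  calc μ (closedBall x δ) * ν (closedBall x r) ≤ c ^ K * M * μ (closedBall x r) :=
        addHaar_closedBall_mul_measure_closedBall_le μ ha.le hb0
          (fun r hr hrδ => hδx ⟨hr, hrδ⟩) hr hδK hK
    _ ≤ ε * μ (closedBall x δ) * μ (closedBall x r) := by gcongr ?_ * _; exact (hK₀ K hK₀K).le
    _ = μ (closedBall x δ) * (ε * μ (closedBall x r)) := by ring

theorem ae_frequently_measure_closedBall_mul_le (ν : Measure E) [IsLocallyFiniteMeasure ν]
    {a b : ℝ} (ha : 1 < a) (hb : a ^ finrank ℝ E < b) :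
    ∀ᵐ x ∂ν, ∃ᶠ r in 𝓝[>] 0, ν (closedBall x (a * r)) ≤ ENNReal.ofReal b * ν (closedBall x r) := by
  refine ae_iff.2 (measure_null_of_frequently_le_smul (μ := Measure.addHaar) fun x hx ε hε => ?_)
  simp only [mem_ofPred_eq, not_frequently, not_le] at hx
  exact (eventually_measure_closedBall_le_mul_addHaar Measure.addHaar ha hb
    (hx.mono fun _ hr => hr.le) hε).frequently

end FiniteDimensional

/-- `Fin d → ℝ` carries the sup metric, so `closedBall x (l / 2)` is the cube of side `l`
centred at `x`. -/
theorem stmt0 (d : ℕ) (ν : Measure (Fin d → ℝ)) [IsLocallyFiniteMeasure ν]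
    (a b : ℝ) (ha : 1 < a) (hb : a ^ d < b) :
    ∀ᵐ x ∂ν, ∃ l : ℕ → ℝ, (∀ k, 0 < l k) ∧ Tendsto l atTop (nhds 0) ∧
      ∀ k, ν (closedBall x (a * l k / 2)) ≤ ENNReal.ofReal b * ν (closedBall x (l k / 2)) := by
  have hb' : a ^ finrank ℝ (Fin d → ℝ) < b := by rwa [Module.finrank_fin_fun]
  filter_upwards [ae_frequently_measure_closedBall_mul_le ν ha hb'] with x hx
  obtain ⟨r, hr_lim, hr⟩ := frequently_iff_seq_forall.1 (hx.and_eventually self_mem_nhdsWithin)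
  refine ⟨fun k => 2 * r k, fun k => mul_pos two_pos (hr k).2, ?_, fun k => ?_⟩
  · simpa using (hr_lim.mono_right nhdsWithin_le_nhds).const_mul 2
  · rw [mul_left_comm, mul_div_cancel_left₀ _ two_ne_zero, mul_div_cancel_left₀ _ two_ne_zero]
    exact (hr k).1
end

section
/- Let ν be a Radon measure on ℝ^d, a > 1, b > a^d, and let Z_j be the set of points x for which no cube Q centered at x with ℓ(Q) ≤ 2^{-j} is (a,b)-ν-doubling. Then for every cube Q_0 of side length 2^{-j}, if x ∈ Q_0 ∩ Z_j and Q_x is the cube centered at x with side length a^{-k}ℓ(Q_0), then ν(Q_x) ≤ b^{-k} ν(2Q_0). -/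
open MeasureTheory Metric

/-- In the proof of Lemma 2.2: cubes in `ℝ^d` are modelled as closed balls
in the sup metric (`Fin d → ℝ`), a cube of side `l` centered at `x` being `closedBall x (l/2)`.
`Zj` is the set of points `x` such that no cube centered at `x` of side `≤ 2^(-j)` is
`(a,b)`-`ν`-doubling.  Then for any cube `Q₀` of side `2^(-j)`, any `x ∈ Q₀ ∩ Zj` and any `k`,
the cube `Qₓ` centered at `x` of side `a^(-k) · 2^(-j)` satisfies `ν Qₓ ≤ b^(-k) ν (2Q₀)`. -/
theorem stmt1 (d : ℕ) (ν : Measure (Fin d → ℝ)) (a b : ℝ) (ha : 1 < a) (hb : a ^ d < b)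
    (j : ℤ) (Zj : Set (Fin d → ℝ))
    (hZj : Zj = {x | ∀ l : ℝ, 0 < l → l ≤ (2 : ℝ) ^ (-j) →
      ¬ (ν (closedBall x (a * l / 2)) ≤ ENNReal.ofReal b * ν (closedBall x (l / 2)))})
    (x₀ x : Fin d → ℝ) (hx : x ∈ closedBall x₀ ((2 : ℝ) ^ (-j) / 2) ∩ Zj) (k : ℕ) :
    ν (closedBall x (a ^ (-(k : ℤ)) * (2 : ℝ) ^ (-j) / 2))
      ≤ ENNReal.ofReal (b ^ (-(k : ℤ))) * ν (closedBall x₀ ((2 : ℝ) ^ (-j))) := by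
  obtain ⟨hx₀, hxZ⟩ := hx
  subst hZj
  have ha0 : (0 : ℝ) < a := lt_trans one_pos ha
  have hb1 : (1 : ℝ) < b := lt_of_le_of_lt (one_le_pow₀ ha.le) hb
  have hb0 : (0 : ℝ) < b := lt_trans one_pos hb1
  have h2j : (0 : ℝ) < (2 : ℝ) ^ (-j) := zpow_pos (by norm_num) _
  induction k with
  | zero =>
    simp only [Nat.cast_zero, neg_zero, zpow_zero, one_mul, ENNReal.ofReal_one]
    refine measure_mono (closedBall_subset_closedBall' ?_)
    have := mem_closedBall.mp hx₀
    linarith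
  | succ k ih =>
    set l : ℝ := a ^ (-(k + 1 : ℤ)) * (2 : ℝ) ^ (-j) with hl
    have hl0 : 0 < l := mul_pos (zpow_pos ha0 _) h2j
    have hl2 : l ≤ (2 : ℝ) ^ (-j) := by
      have h1 : a ^ (-(k + 1 : ℤ)) ≤ 1 := zpow_le_one_of_nonpos₀ ha.le (by omega)
      calc l ≤ 1 * (2 : ℝ) ^ (-j) := by
              exact mul_le_mul_of_nonneg_right h1 h2j.le
        _ = (2 : ℝ) ^ (-j) := one_mul _
    have hnd := hxZ l hl0 hl2
    rw [not_le] at hnd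
    have hal : a * l = a ^ (-(k : ℤ)) * (2 : ℝ) ^ (-j) := by
      rw [hl, ← mul_assoc, ← zpow_one_add₀ (ne_of_gt ha0)]
      norm_num
    rw [hal] at hnd
    have hkey : ENNReal.ofReal b * ν (closedBall x (l / 2))
        ≤ ENNReal.ofReal (b ^ (-(k : ℤ))) * ν (closedBall x₀ ((2 : ℝ) ^ (-j))) :=
      le_trans hnd.le ih
    have hbne : ENNReal.ofReal b ≠ 0 := by
      simp [ENNReal.ofReal_eq_zero, not_le, hb0]
    have hbnt : ENNReal.ofReal b ≠ ⊤ := ENNReal.ofReal_ne_top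
    have : ν (closedBall x (l / 2))
        ≤ (ENNReal.ofReal b)⁻¹ *
          (ENNReal.ofReal (b ^ (-(k : ℤ))) * ν (closedBall x₀ ((2 : ℝ) ^ (-j)))) := by
      calc ν (closedBall x (l / 2))
          = (ENNReal.ofReal b)⁻¹ * (ENNReal.ofReal b * ν (closedBall x (l / 2))) := by
            rw [← mul_assoc, ENNReal.inv_mul_cancel hbne hbnt, one_mul]
        _ ≤ _ := mul_le_mul_right hkey _
    refine le_trans this (le_of_eq ?_)
    rw [← mul_assoc]
    congr 1
    rw [← ENNReal.ofReal_inv_of_pos hb0, ← ENNReal.ofReal_mul (by positivity)]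
    congr 1
    rw [← zpow_neg_one, ← zpow_add₀ (ne_of_gt hb0)]
    congr 1
    push_cast
    ring
end

section
/- Let 1 ≤ n < d and write x = x_H + x_V ∈ ℝ^d, where x_H is the projection onto the first n coordinates and x_V onto the last d−n coordinates. Let 0 < s < 1 and suppose x, y ∈ ℝ^d \ {0} satisfy |x_V| ≤ s|x_H|, |y_V| ≤ s|y_H|, and |x_V − y_V| ≤ s|x_H − y_H|. Then there exists a constant C > 0 depending only on s such that |x_V − y_V| ≤ C | (|x|/|x_H|) x_H − (|y|/|y_H|) y_H |. -/
/-- Projection of `x ∈ ℝ^d` onto the first `n` coordinates (viewed inside `ℝ^d`). -/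
noncomputable def horiz (n d : ℕ) (x : EuclideanSpace ℝ (Fin d)) : EuclideanSpace ℝ (Fin d) :=
  (WithLp.equiv 2 (Fin d → ℝ)).symm (fun i => if (i : ℕ) < n then x i else 0)

/-- Projection of `x ∈ ℝ^d` onto the last `d - n` coordinates (viewed inside `ℝ^d`). -/
noncomputable def vert (n d : ℕ) (x : EuclideanSpace ℝ (Fin d)) : EuclideanSpace ℝ (Fin d) :=
  (WithLp.equiv 2 (Fin d → ℝ)).symm (fun i => if (i : ℕ) < n then 0 else x i)

open scoped InnerProductSpace

/-
Write `x = a + u`, `y = b + v` with `a, b` horizontal and `u, v` vertical, and let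
`R = ‖(‖x‖/‖a‖) a - (‖y‖/‖b‖) b‖`. Pushing `a` and `b` radially outward does not decrease the
angular part of their distance, so `‖a - b‖ ≤ |‖a‖ - ‖b‖| + R`; and `R ≥ |‖x‖ - ‖y‖|`.
Since `‖a‖² - ‖b‖² = (‖x‖² - ‖y‖²) - (‖u‖² - ‖v‖²)` and the cone condition makes `‖x‖ + ‖y‖`
and `‖u‖ + ‖v‖` comparable to `‖a‖ + ‖b‖`, also `|‖a‖ - ‖b‖| ≤ (1 + s) R + s ‖u - v‖`.
Feeding both into `‖u - v‖ ≤ s ‖a - b‖` gives `(1 - s²) ‖u - v‖ ≤ s (2 + s) R`.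
-/

theorem ne_zero_of_add_ne_zero_of_norm_le_mul {E : Type*} [NormedAddCommGroup E] {s : ℝ}
    {a u : E} (hau : a + u ≠ 0) (hu : ‖u‖ ≤ s * ‖a‖) : a ≠ 0 := by
  rintro rfl
  simp_all

section InnerProductSpace

variable {E : Type*} [NormedAddCommGroup E] [InnerProductSpace ℝ E]

theorem norm_sub_le_abs_norm_sub_norm_add_norm_smul_sub_smul (a b : E) {l m : ℝ}
    (hl : 1 ≤ l) (hm : 1 ≤ m) :
    ‖a - b‖ ≤ |‖a‖ - ‖b‖| + ‖l • a - m • b‖ := by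
  have hab := norm_sub_sq_real a b
  have hlm := norm_sub_sq_real (l • a) (m • b)
  rw [real_inner_smul_left, real_inner_smul_right, norm_smul, norm_smul, Real.norm_eq_abs,
    Real.norm_eq_abs, abs_of_nonneg (by linarith), abs_of_nonneg (by linarith)] at hlm
  -- the defect of the squared distance from `(‖a‖ - ‖b‖)²` only grows, by the factor `l * m`
  have hdefect : 0 ≤ (l * m - 1) * (‖a‖ * ‖b‖ - ⟪a, b⟫_ℝ) :=
    mul_nonneg (by nlinarith) (sub_nonneg.2 (real_inner_le_norm a b))
  refine le_of_sq_le_sq ?_ (by positivity)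
  nlinarith [sq_abs (‖a‖ - ‖b‖), sq_nonneg (l * ‖a‖ - m * ‖b‖),
    mul_nonneg (abs_nonneg (‖a‖ - ‖b‖)) (norm_nonneg (l • a - m • b))]

theorem norm_le_norm_add_of_inner_eq_zero {a u : E} (h : ⟪a, u⟫_ℝ = 0) : ‖a‖ ≤ ‖a + u‖ :=
  (mul_self_le_mul_self_iff (norm_nonneg _) (norm_nonneg _)).2 <| by
    rw [norm_add_sq_eq_norm_sq_add_norm_sq_real h]
    nlinarith [norm_nonneg u]

theorem abs_norm_sub_norm_le_of_inner_eq_zero {s : ℝ} (hs : 0 ≤ s) {a u b v : E}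
    (hau : ⟪a, u⟫_ℝ = 0) (hbv : ⟪b, v⟫_ℝ = 0) (hu : ‖u‖ ≤ s * ‖a‖) (hv : ‖v‖ ≤ s * ‖b‖) :
    |‖a‖ - ‖b‖| ≤ (1 + s) * |‖a + u‖ - ‖b + v‖| + s * ‖u - v‖ := by
  have hx := norm_add_sq_eq_norm_sq_add_norm_sq_real hau
  have hy := norm_add_sq_eq_norm_sq_add_norm_sq_real hbv
  have hxa : ‖a + u‖ ≤ (1 + s) * ‖a‖ := by linarith [norm_add_le a u]
  have hyb : ‖b + v‖ ≤ (1 + s) * ‖b‖ := by linarith [norm_add_le b v]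
  rcases (add_nonneg (norm_nonneg a) (norm_nonneg b)).eq_or_lt with hP | hP
  · have ha : ‖a‖ = 0 := by linarith [norm_nonneg a, norm_nonneg b]
    have hb : ‖b‖ = 0 := by linarith [norm_nonneg a, norm_nonneg b]
    rw [ha, hb, sub_self, abs_zero]
    positivity
  refine le_of_mul_le_mul_right ?_ hP
  calc |‖a‖ - ‖b‖| * (‖a‖ + ‖b‖)
      = |(‖a + u‖ - ‖b + v‖) * (‖a + u‖ + ‖b + v‖) - (‖u‖ - ‖v‖) * (‖u‖ + ‖v‖)| := by
        rw [← abs_of_pos hP, ← abs_mul]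
        congr 1
        linear_combination hy - hx
    _ ≤ |‖a + u‖ - ‖b + v‖| * (‖a + u‖ + ‖b + v‖) + |‖u‖ - ‖v‖| * (‖u‖ + ‖v‖) := by
        grw [abs_sub, abs_mul, abs_mul, abs_of_nonneg (by positivity : 0 ≤ ‖a + u‖ + ‖b + v‖),
          abs_of_nonneg (by positivity : 0 ≤ ‖u‖ + ‖v‖)]
    _ ≤ |‖a + u‖ - ‖b + v‖| * ((1 + s) * (‖a‖ + ‖b‖)) + ‖u - v‖ * (s * (‖a‖ + ‖b‖)) := by
        gcongr
        · linarith
        · exact abs_norm_sub_norm_le u v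
        · linarith
    _ = ((1 + s) * |‖a + u‖ - ‖b + v‖| + s * ‖u - v‖) * (‖a‖ + ‖b‖) := by ring

theorem one_sub_sq_mul_norm_sub_le {s : ℝ} (hs : 0 ≤ s) {a u b v : E} (ha : a ≠ 0) (hb : b ≠ 0)
    (hau : ⟪a, u⟫_ℝ = 0) (hbv : ⟪b, v⟫_ℝ = 0) (hu : ‖u‖ ≤ s * ‖a‖) (hv : ‖v‖ ≤ s * ‖b‖)
    (huv : ‖u - v‖ ≤ s * ‖a - b‖) :
    (1 - s ^ 2) * ‖u - v‖ ≤ s * (2 + s) * ‖(‖a + u‖ / ‖a‖) • a - (‖b + v‖ / ‖b‖) • b‖ := by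
  set R := ‖(‖a + u‖ / ‖a‖) • a - (‖b + v‖ / ‖b‖) • b‖
  have ha_pos := norm_pos_iff.2 ha
  have hb_pos := norm_pos_iff.2 hb
  have hradial : |‖a + u‖ - ‖b + v‖| ≤ R := by
    convert abs_norm_sub_norm_le ((‖a + u‖ / ‖a‖) • a) ((‖b + v‖ / ‖b‖) • b) using 3 <;>
      rw [norm_smul, norm_div, norm_norm, norm_norm, div_mul_cancel₀ _ (by positivity)]
  have hangular : ‖a - b‖ ≤ |‖a‖ - ‖b‖| + R :=
    norm_sub_le_abs_norm_sub_norm_add_norm_smul_sub_smul a b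
      ((one_le_div ha_pos).2 (norm_le_norm_add_of_inner_eq_zero hau))
      ((one_le_div hb_pos).2 (norm_le_norm_add_of_inner_eq_zero hbv))
  have hnorms := abs_norm_sub_norm_le_of_inner_eq_zero hs hau hbv hu hv
  linarith [mul_le_mul_of_nonneg_left hangular hs, mul_le_mul_of_nonneg_left hnorms hs,
    mul_le_mul_of_nonneg_left hradial (by positivity : 0 ≤ s * (1 + s))]

end InnerProductSpace

lemma horiz_add_vert (n d : ℕ) (x : EuclideanSpace ℝ (Fin d)) :
    horiz n d x + vert n d x = x := by
  ext i
  simp only [horiz, vert, WithLp.equiv_symm_apply, PiLp.add_apply]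
  split <;> simp

lemma inner_horiz_vert (n d : ℕ) (x y : EuclideanSpace ℝ (Fin d)) :
    ⟪horiz n d x, vert n d y⟫_ℝ = 0 := by
  rw [PiLp.inner_apply]
  refine Finset.sum_eq_zero fun i _ => ?_
  simp only [horiz, vert, WithLp.equiv_symm_apply, PiLp.toLp_apply, RCLike.inner_apply,
    starRingEnd_apply]
  split <;> simp

/-- Lemma 2.4: given `0 < s < 1`, there is `C > 0` depending only on `s`
such that for all `1 ≤ n < d` and all nonzero `x, y ∈ ℝ^d` with `|x_V| ≤ s|x_H|`,
`|y_V| ≤ s|y_H|` and `|x_V − y_V| ≤ s|x_H − y_H|`, one has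
`|x_V − y_V| ≤ C·|(|x|/|x_H|)x_H − (|y|/|y_H|)y_H|`. -/
theorem stmt2 (s : ℝ) (hs0 : 0 < s) (hs1 : s < 1) :
    ∃ C > 0, ∀ (n d : ℕ), 1 ≤ n → n < d →
      ∀ x y : EuclideanSpace ℝ (Fin d), x ≠ 0 → y ≠ 0 →
        ‖vert n d x‖ ≤ s * ‖horiz n d x‖ →
        ‖vert n d y‖ ≤ s * ‖horiz n d y‖ →
        ‖vert n d x - vert n d y‖ ≤ s * ‖horiz n d x - horiz n d y‖ →
        ‖vert n d x - vert n d y‖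
          ≤ C * ‖(‖x‖ / ‖horiz n d x‖) • horiz n d x - (‖y‖ / ‖horiz n d y‖) • horiz n d y‖ := by
  have h1s2 : 0 < 1 - s ^ 2 := by nlinarith
  refine ⟨s * (2 + s) / (1 - s ^ 2), by positivity, ?_⟩
  intro n d _ _ x y hx hy hxs hys hxys
  have ha := ne_zero_of_add_ne_zero_of_norm_le_mul (by rwa [horiz_add_vert]) hxs
  have hb := ne_zero_of_add_ne_zero_of_norm_le_mul (by rwa [horiz_add_vert]) hys
  have key := one_sub_sq_mul_norm_sub_le hs0.le ha hb (inner_horiz_vert n d x x)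
    (inner_horiz_vert n d y y) hxs hys hxys
  rw [horiz_add_vert, horiz_add_vert] at key
  rw [div_mul_eq_mul_div, le_div_iff₀ h1s2]
  linarith
end

section
/- Let x, y ∈ ℝ^d \ {0} with |x| ≤ |y| ≤ 2|x|, and suppose the cosine c_0 of the angle between −x and y − x satisfies c_0 ≤ −a for some a > 0. Then |y − x| ≤ (3/a)(|y| − |x|). -/
/-!
By the law of cosines, `c₀ ≤ -a` gives `|y|² ≥ |x|² + 2a|x||y - x| + |y - x|²`. Hence
`(|y| - |x|)(|y| + |x|) ≥ 2a|x||y - x|`, and `|y| + |x| ≤ 3|x|` turns this into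
`3(|y| - |x|) ≥ 2a|y - x|` (when `x = 0`, both `y` and `y - x` vanish).
-/

open RealInnerProductSpace

theorem sq_add_mul_add_sq_le_norm_sq_of_inner_neg_le {E : Type*} [NormedAddCommGroup E]
    [InnerProductSpace ℝ E] (x y : E) (a : ℝ) (hc : ⟪-x, y - x⟫ ≤ -a * (‖x‖ * ‖y - x‖)) :
    ‖x‖ ^ 2 + 2 * a * ‖x‖ * ‖y - x‖ + ‖y - x‖ ^ 2 ≤ ‖y‖ ^ 2 := by
  have law_of_cosines : ‖y‖ ^ 2 = ‖x‖ ^ 2 - 2 * ⟪-x, y - x⟫ + ‖y - x‖ ^ 2 := by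
    simpa [inner_neg_left, sub_eq_add_neg] using norm_add_sq_real x (y - x)
  linarith

theorem le_div_mul_sub_of_sq_add_mul_add_sq_le {p q r a : ℝ} (hp : 0 ≤ p) (hq : 0 ≤ q)
    (hr : 0 ≤ r) (ha : 0 < a) (hqp : q ≤ 2 * p) (h : p ^ 2 + 2 * a * p * r + r ^ 2 ≤ q ^ 2) :
    r ≤ 3 / a * (q - p) := by
  have hapr : 0 ≤ 2 * a * p * r := by positivity
  have hpq : p ≤ q := (pow_le_pow_iff_left₀ hp hq two_ne_zero).mp (by nlinarith)
  rw [div_mul_eq_mul_div, le_div_iff₀ ha]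
  rcases hp.eq_or_lt with rfl | hp
  · obtain rfl : q = 0 := by linarith
    obtain rfl : r = 0 := by nlinarith
    simp
  · have hscaled : p * (2 * a * r) ≤ p * (3 * (q - p)) := by
      calc p * (2 * a * r) ≤ (q - p) * (q + p) := by linarith [sq_nonneg r]
        _ ≤ (q - p) * (3 * p) := by gcongr; linarith
        _ = p * (3 * (q - p)) := by ring
    linarith [le_of_mul_le_mul_left hscaled hp, mul_nonneg ha.le hr]

theorem stmt4_general (d : ℕ) (x y : EuclideanSpace ℝ (Fin d))
    (h2 : ‖y‖ ≤ 2 * ‖x‖) (a : ℝ) (ha : 0 < a)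
    (hc : (inner ℝ (-x) (y - x) : ℝ) ≤ -a * (‖x‖ * ‖y - x‖)) :
    ‖y - x‖ ≤ (3 / a) * (‖y‖ - ‖x‖) :=
  le_div_mul_sub_of_sq_add_mul_add_sq_le (norm_nonneg x) (norm_nonneg y) (norm_nonneg _) ha h2
    (sq_add_mul_add_sq_le_norm_sq_of_inner_neg_le x y a hc)

/-- Let `x, y ∈ ℝ^d \ {0}` with `|x| ≤ |y| ≤ 2|x|`, and suppose the cosine
`c₀` of the angle between `−x` and `y − x` satisfies `c₀ ≤ −a` for some `a > 0` (equivalently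
`⟪−x, y−x⟫ ≤ −a·|x|·|y−x|`).  Then `|y − x| ≤ (3/a)(|y| − |x|)`. -/
theorem stmt4 (d : ℕ) (x y : EuclideanSpace ℝ (Fin d)) (hx : x ≠ 0) (hy : y ≠ 0)
    (h1 : ‖x‖ ≤ ‖y‖) (h2 : ‖y‖ ≤ 2 * ‖x‖) (a : ℝ) (ha : 0 < a)
    (hc : (inner ℝ (-x) (y - x) : ℝ) ≤ -a * (‖x‖ * ‖y - x‖)) :
    ‖y - x‖ ≤ (3 / a) * (‖y‖ - ‖x‖) :=
  stmt4_general d x y h2 a ha hc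
end
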